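/- arXiv:1812.02571 — 4 statements merged into one kernel-verified Lean document; each statement's English description precedes it below -/
import Mathlib

section
/- Let f, f̃ : [0,∞) → ℝ be twice differentiable with f'' + f ≥ 1 and f̃'' + f̃ = 1, f(0) = f̃(0) ∈ [0,1), and f'(0) = f̃'(0). Let t₀ > 0 be such that 1 − f̃(t) ≥ 0 on [0, t₀]. Then f(t) ≥ f̃(t) for all t ∈ [0, t₀]. -/
/-!
For fixed `t`, the function `Φ(s) = g'(s) sin (t - s) + g(s) cos (t - s)` has derivative
`(g'' + g)(s) sin (t - s)`, so it is nondecreasing on `[a, t]` when `g'' + g ≥ 0` and `t - a ≤ π`.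
Comparing `Φ(a)` with `Φ(t) = g(t)` shows that a supersolution of `y'' + y = 0` dominates, on an
interval of length `π`, the solution with the same initial data.

Applied to `g = f̃ - 1` on `[0, π]` this gives `f̃(π) - 1 = 1 - f̃(0) > 0`, so `1 - f̃ ≥ 0` on
`[0, t₀]` forces `t₀ < π`; applied to `g = f - f̃`, whose initial data vanish, it gives `f ≥ f̃`.
-/

open Real Set

theorem hasDerivAt_mul_sin_sub_add_mul_cos_sub {g g' g'' : ℝ → ℝ} {s : ℝ} (t : ℝ)
    (hg : HasDerivAt g (g' s) s) (hg' : HasDerivAt g' (g'' s) s) :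
    HasDerivAt (fun r => g' r * sin (t - r) + g r * cos (t - r))
      ((g'' s + g s) * sin (t - s)) s := by
  have hsin : HasDerivAt (fun r => sin (t - r)) (-cos (t - s)) s := by
    simpa using ((hasDerivAt_id s).const_sub t).sin
  have hcos : HasDerivAt (fun r => cos (t - r)) (sin (t - s)) s := by
    simpa using ((hasDerivAt_id s).const_sub t).cos
  exact ((hg'.mul hsin).add (hg.mul hcos)).congr_deriv (by ring)

theorem mul_sin_sub_add_mul_cos_sub_le_of_add_nonneg {g g' g'' : ℝ → ℝ} {a t : ℝ}
    (hat : a ≤ t) (htπ : t ≤ a + π)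
    (hg : ∀ s ∈ Icc a t, HasDerivAt g (g' s) s) (hg' : ∀ s ∈ Icc a t, HasDerivAt g' (g'' s) s)
    (hsuper : ∀ s ∈ Icc a t, 0 ≤ g'' s + g s) :
    g' a * sin (t - a) + g a * cos (t - a) ≤ g t := by
  have hΦ : ∀ s ∈ Icc a t, HasDerivAt (fun r => g' r * sin (t - r) + g r * cos (t - r))
      ((g'' s + g s) * sin (t - s)) s := fun s hs =>
    hasDerivAt_mul_sin_sub_add_mul_cos_sub t (hg s hs) (hg' s hs)
  have hmono := monotoneOn_of_hasDerivWithinAt_nonneg (convex_Icc a t)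
    (fun s hs => (hΦ s hs).continuousAt.continuousWithinAt)
    (fun s hs => (hΦ s (interior_subset hs)).hasDerivWithinAt)
    (fun s hs => by
      rw [interior_Icc] at hs
      exact mul_nonneg (hsuper s (Ioo_subset_Icc_self hs))
        (sin_nonneg_of_nonneg_of_le_pi (by linarith [hs.2]) (by linarith [hs.1])))
  simpa using hmono (left_mem_Icc.2 hat) (right_mem_Icc.2 hat) hat

theorem ode_comparison_spherical_general (f f' : ℝ → ℝ) (t₀ : ℝ)
    (hf1 : ∀ t ≥ (0:ℝ), DifferentiableAt ℝ f t)
    (hf2 : ∀ t ≥ (0:ℝ), DifferentiableAt ℝ (deriv f) t)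
    (hf'1 : ∀ t ≥ (0:ℝ), DifferentiableAt ℝ f' t)
    (hf'2 : ∀ t ≥ (0:ℝ), DifferentiableAt ℝ (deriv f') t)
    (hineq : ∀ t ≥ (0:ℝ), 1 ≤ deriv (deriv f) t + f t)
    (heq : ∀ t ≥ (0:ℝ), deriv (deriv f') t + f' t = 1)
    (h0 : f 0 = f' 0) (h0mem : f 0 ∈ Set.Ico (0:ℝ) 1)
    (h0' : deriv f 0 = deriv f' 0)
    (hpos : ∀ t ∈ Set.Icc (0:ℝ) t₀, 0 ≤ 1 - f' t) :
    ∀ t ∈ Set.Icc (0:ℝ) t₀, f' t ≤ f t := by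
  have ht₀π : t₀ < π := by
    by_contra! hπt₀
    have hπ := mul_sin_sub_add_mul_cos_sub_le_of_add_nonneg (g := fun s => f' s - 1)
      (g'' := deriv (deriv f')) pi_pos.le (by simp)
      (fun s hs => ((hf'1 s hs.1).hasDerivAt).sub_const 1)
      (fun s hs => (hf'2 s hs.1).hasDerivAt)
      (fun s hs => by linarith [heq s hs.1])
    simp only [sub_zero, sin_pi, cos_pi] at hπ
    linarith [hpos π ⟨pi_pos.le, hπt₀⟩, h0mem.2]
  intro t ht
  have hcomp := mul_sin_sub_add_mul_cos_sub_le_of_add_nonneg (g := fun s => f s - f' s)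
    (g'' := fun s => deriv (deriv f) s - deriv (deriv f') s) ht.1 (by linarith [ht.2])
    (fun s hs => (hf1 s hs.1).hasDerivAt.sub (hf'1 s hs.1).hasDerivAt)
    (fun s hs => (hf2 s hs.1).hasDerivAt.sub (hf'2 s hs.1).hasDerivAt)
    (fun s hs => by linarith [hineq s hs.1, heq s hs.1])
  simp only [h0, h0', sub_self, zero_mul, add_zero] at hcomp
  linarith

theorem ode_comparison_spherical (f f' : ℝ → ℝ) (t₀ : ℝ) (ht₀ : 0 < t₀)
    (hf1 : ∀ t ≥ (0:ℝ), DifferentiableAt ℝ f t)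
    (hf2 : ∀ t ≥ (0:ℝ), DifferentiableAt ℝ (deriv f) t)
    (hf'1 : ∀ t ≥ (0:ℝ), DifferentiableAt ℝ f' t)
    (hf'2 : ∀ t ≥ (0:ℝ), DifferentiableAt ℝ (deriv f') t)
    (hineq : ∀ t ≥ (0:ℝ), 1 ≤ deriv (deriv f) t + f t)
    (heq : ∀ t ≥ (0:ℝ), deriv (deriv f') t + f' t = 1)
    (h0 : f 0 = f' 0) (h0mem : f 0 ∈ Set.Ico (0:ℝ) 1)
    (h0' : deriv f 0 = deriv f' 0)
    (hpos : ∀ t ∈ Set.Icc (0:ℝ) t₀, 0 ≤ 1 - f' t) :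
    ∀ t ∈ Set.Icc (0:ℝ) t₀, f' t ≤ f t :=
  ode_comparison_spherical_general f f' t₀ hf1 hf2 hf'1 hf'2 hineq heq h0 h0mem h0' hpos
end

section
/- Let A ≥ 0 and a ∈ [0, arccot A]. If arccos(A/(A·cos a + sin a)) = arccot A (with arccot 0 = π/2, and assuming A·cos a + sin a > 0), then a = arccot A or A = 0. -/
/-!
With `A = cot ℓ`, the denominator is `A cos a + sin a = cos (ℓ - a) / sin ℓ`, so the hypothesis
reads `cos ℓ / cos (ℓ - a) = cos ℓ`. Hence `cos ℓ = 0` (that is, `A = 0`) or `cos (ℓ - a) = 1`,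
and the latter forces `a = ℓ` because `0 ≤ ℓ - a < π`.
-/

open Real

lemma Real.cos_eq_of_arccos_eq {x ℓ : ℝ} (h : arccos x = ℓ) (hℓ₀ : 0 < ℓ) (hℓπ : ℓ < π) :
    cos ℓ = x := by
  have hx₁ : x < 1 := not_le.mp fun hx ↦ hℓ₀.ne' (h ▸ arccos_eq_zero.mpr hx)
  have hx₂ : -1 < x := not_le.mp fun hx ↦ hℓπ.ne (h ▸ arccos_eq_pi.mpr hx)
  rw [← h, cos_arccos hx₂.le hx₁.le]

lemma Real.cot_mul_cos_add_sin {ℓ : ℝ} (hℓ : sin ℓ ≠ 0) (a : ℝ) :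
    cos ℓ / sin ℓ * cos a + sin a = cos (ℓ - a) / sin ℓ := by
  rw [cos_sub]
  field_simp

lemma eq_zero_or_eq_one_of_div_eq_self {K : Type*} [DivisionRing K] {x c : K}
    (h : x / c = x) : x = 0 ∨ c = 1 := by
  refine or_iff_not_imp_left.mpr fun hx ↦ ?_
  have hc : c ≠ 0 := by
    rintro rfl
    exact hx (by rw [← h, div_zero])
  rwa [div_eq_iff hc, eq_comm, mul_eq_left₀ hx] at h

theorem equality_analysis_spherical_general (A ℓ a : ℝ)
    (hℓ : ℓ ∈ Set.Ioc 0 (Real.pi / 2)) (hcot : Real.cos ℓ / Real.sin ℓ = A)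
    (ha : a ∈ Set.Icc 0 ℓ)
    (h : Real.arccos (A / (A * Real.cos a + Real.sin a)) = ℓ) :
    a = ℓ ∨ A = 0 := by
  obtain ⟨hℓ₀, hℓπ⟩ := hℓ
  obtain ⟨ha₀, haℓ⟩ := ha
  have hsin : sin ℓ ≠ 0 := (sin_pos_of_pos_of_lt_pi hℓ₀ (by linarith [pi_pos])).ne'
  subst hcot
  rw [cot_mul_cos_add_sin hsin, div_div_div_cancel_right₀ hsin] at h
  rcases eq_zero_or_eq_one_of_div_eq_self (cos_eq_of_arccos_eq h hℓ₀ (by linarith [pi_pos])).symm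
    with hcos | hcos
  · exact .inr (by rw [hcos, zero_div])
  · have : ℓ - a = 0 :=
      (cos_eq_one_iff_of_lt_of_lt (by linarith [pi_pos]) (by linarith [pi_pos])).mp hcos
    exact .inl (by linarith)

theorem equality_analysis_spherical (A ℓ a : ℝ) (hA : 0 ≤ A)
    (hℓ : ℓ ∈ Set.Ioc 0 (Real.pi / 2)) (hcot : Real.cos ℓ / Real.sin ℓ = A)
    (ha : a ∈ Set.Icc 0 ℓ)
    (hden : 0 < A * Real.cos a + Real.sin a)
    (h : Real.arccos (A / (A * Real.cos a + Real.sin a)) = ℓ) :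
    a = ℓ ∨ A = 0 :=
  equality_analysis_spherical_general A ℓ a hℓ hcot ha h
end

section
/- Let h : [0, b] → ℝ be twice differentiable with 0 ≤ h(t) ≤ ℓ for all t, where ℓ > 0 is fixed, and define f(t) = (ℓ − h(t))²/2. If f''(t) ≥ 1 on [0, b], h(0) = a, h'(0) = −c with c ∈ [0, 1], and h(b) = 0, then ℓ²/2 = f(b) ≥ b²/2 + (ℓ − a)·c·b + (ℓ − a)²/2, and hence b² + 2(ℓ − a)·c·b + (a² − 2aℓ) ≤ 0. -/
theorem flat_core (h : ℝ → ℝ) (ℓ a c b : ℝ) (hℓ : 0 < ℓ) (hb : 0 < b)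
    (hrange : ∀ t ∈ Set.Icc 0 b, h t ∈ Set.Icc 0 ℓ)
    (hd1 : ∀ t ∈ Set.Icc 0 b, DifferentiableAt ℝ h t)
    (hd2 : ∀ t ∈ Set.Icc 0 b, DifferentiableAt ℝ (deriv h) t)
    (hf'' : ∀ t ∈ Set.Icc 0 b,
      1 ≤ deriv (deriv (fun t => (ℓ - h t) ^ 2 / 2)) t)
    (h0 : h 0 = a) (h0' : deriv h 0 = -c) (hc : c ∈ Set.Icc (0:ℝ) 1)
    (hb0 : h b = 0) :
    ℓ ^ 2 / 2 = (fun t => (ℓ - h t) ^ 2 / 2) b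
    ∧ b ^ 2 / 2 + (ℓ - a) * c * b + (ℓ - a) ^ 2 / 2 ≤ (fun t => (ℓ - h t) ^ 2 / 2) b
    ∧ b ^ 2 + 2 * (ℓ - a) * c * b + (a ^ 2 - 2 * a * ℓ) ≤ 0 := by
  set F : ℝ → ℝ := fun t => (ℓ - h t) ^ 2 / 2 with hF
  have hmemIcc : Set.Ioo (0:ℝ) b ⊆ Set.Icc 0 b := Set.Ioo_subset_Icc_self
  have hb' : (0:ℝ) ∈ Set.Icc (0:ℝ) b := Set.left_mem_Icc.2 hb.le
  have hbb : b ∈ Set.Icc (0:ℝ) b := Set.right_mem_Icc.2 hb.le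
  have hderivF : ∀ t ∈ Set.Icc (0:ℝ) b, HasDerivAt F (-((ℓ - h t) * deriv h t)) t := by
    intro t ht
    have key : HasDerivAt F ((2 * (ℓ - h t) ^ 1 * (0 - deriv h t)) / 2) t :=
      (((hasDerivAt_const t ℓ).sub (hd1 t ht).hasDerivAt).pow 2).div_const 2
    convert key using 1
    ring
  have hderivF_eq : ∀ t ∈ Set.Icc (0:ℝ) b, deriv F t = -((ℓ - h t) * deriv h t) :=
    fun t ht => (hderivF t ht).deriv
  have hcont2 : ContinuousOn (deriv F) (Set.Icc 0 b) := by
    have : ContinuousOn (fun t => -((ℓ - h t) * deriv h t)) (Set.Icc (0:ℝ) b) :=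
      ((continuousOn_const.sub fun t ht => (hd1 t ht).continuousAt.continuousWithinAt).mul
        fun t ht => (hd2 t ht).continuousAt.continuousWithinAt).neg
    exact this.congr hderivF_eq
  have hdiff2 : ∀ t ∈ Set.Ioo (0:ℝ) b, DifferentiableAt ℝ (deriv F) t := by
    intro t ht
    have hφ : DifferentiableAt ℝ (fun t => -((ℓ - h t) * deriv h t)) t :=
      (((differentiableAt_const ℓ).sub (hd1 t (hmemIcc ht))).mul (hd2 t (hmemIcc ht))).neg
    apply hφ.congr_of_eventuallyEq
    filter_upwards [Ioo_mem_nhds ht.1 ht.2] with x hx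
    exact hderivF_eq x (hmemIcc hx)
  -- Step 1: deriv F t - t is monotone on [0,b]
  have mono1 : MonotoneOn (fun t => deriv F t - t) (Set.Icc 0 b) := by
    apply monotoneOn_of_deriv_nonneg (convex_Icc 0 b)
    · exact hcont2.sub (continuous_id.continuousOn)
    · rw [interior_Icc]
      exact fun t ht => ((hdiff2 t ht).sub differentiableAt_fun_id).differentiableWithinAt
    · rw [interior_Icc]
      intro t ht
      rw [deriv_fun_sub (hdiff2 t ht) differentiableAt_fun_id, deriv_id'']
      have := hf'' t (hmemIcc ht)
      show (0:ℝ) ≤ deriv (deriv F) t - 1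
      linarith
  have step1 : ∀ t ∈ Set.Icc (0:ℝ) b, t + deriv F 0 ≤ deriv F t := by
    intro t ht
    have := mono1 hb' ht ht.1
    simp only [sub_zero] at this
    linarith [this]
  -- Step 2: F t - (t^2/2 + deriv F 0 * t) is monotone on [0,b]
  have mono2 : MonotoneOn (fun t => F t - (t ^ 2 / 2 + deriv F 0 * t)) (Set.Icc 0 b) := by
    apply monotoneOn_of_deriv_nonneg (convex_Icc 0 b)
    · exact (ContinuousOn.sub
        (fun t ht => ((hderivF t ht).differentiableAt.continuousAt).continuousWithinAt)
        (by fun_prop))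
    · rw [interior_Icc]
      intro t ht
      exact ((hderivF t (hmemIcc ht)).differentiableAt.sub (by fun_prop)).differentiableWithinAt
    · rw [interior_Icc]
      intro t ht
      have hd : DifferentiableAt ℝ (fun t => t ^ 2 / 2 + deriv F 0 * t) t := by fun_prop
      rw [deriv_fun_sub (hderivF t (hmemIcc ht)).differentiableAt hd]
      have hdq : deriv (fun t => t ^ 2 / 2 + deriv F 0 * t) t = t + deriv F 0 := by
        rw [deriv_fun_add (by fun_prop) (by fun_prop), deriv_div_const, deriv_pow_field,
          deriv_const_mul _ differentiableAt_fun_id, deriv_id'']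
        ring
      rw [hdq]
      have := step1 t (hmemIcc ht)
      linarith
  have key := mono2 hb' hbb hb.le
  simp only [ne_eq, OfNat.ofNat_ne_zero, not_false_eq_true, zero_pow, zero_div, mul_zero,
    add_zero, sub_zero] at key
  -- compute deriv F 0 and F 0
  have hdF0 : deriv F 0 = (ℓ - a) * c := by
    rw [hderivF_eq 0 hb', h0, h0']; ring
  have hF0 : F 0 = (ℓ - a) ^ 2 / 2 := by simp [hF, h0]
  have hFb : F b = ℓ ^ 2 / 2 := by simp [hF, hb0]
  rw [hdF0, hF0] at key
  have key2 : b ^ 2 / 2 + (ℓ - a) * c * b + (ℓ - a) ^ 2 / 2 ≤ ℓ ^ 2 / 2 := by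
    rw [← hFb]; linarith [key]
  refine ⟨hFb.symm, by rw [hFb]; exact key2, by nlinarith [key2]⟩
end

section
/- Let ℓ ∈ (0, π/2], a ∈ [0, ℓ], c ∈ [0, 1], b > 0, and let f : [0, b] → ℝ be twice differentiable with f'' + f ≥ 1, f(0) = 1 − cos(ℓ − a), f'(0) = sin(ℓ − a)·c, and f(b) = 1 − cos ℓ. Suppose moreover 1 − f̃ ≥ 0 on [0, b] where f̃(t) = 1 − cos(ℓ − a)cos t + sin(ℓ − a)sin t·c. Then cos ℓ ≤ cos(ℓ − a)·cos b − sin(ℓ − a)·sin b·c ≤ cos(ℓ − a)·cos b. -/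
/-!
With `A = cos (ℓ - a)` and `B = sin (ℓ - a) * c`, `f̃ t = 1 - A cos t + B sin t` solves
`f̃'' + f̃ = 1` with the initial data of `f`. For `0 ≤ b ≤ π` the variation-of-parameters
quantity `f' t * sin (b - t) + (f t - 1) * cos (b - t)` is nondecreasing on `[0, b]`, its
derivative being `(f'' + f - 1) t * sin (b - t)`; comparing its values at `0` and `b` gives
`f̃ b ≤ f b`, and `B sin b ≥ 0` gives the second inequality. If `b > π`, then `f̃ ≤ 1` at
`π/2` and at `π` forces `A = B = 0`, and `cos ℓ ≤ cos (ℓ - a) = 0`.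
-/

open Real Set

theorem const_add_mul_cos_add_mul_sin_le_of_const_le_deriv_deriv_add
    (f : ℝ → ℝ) (k b : ℝ) (hb₀ : 0 ≤ b) (hbπ : b ≤ π)
    (hf : ∀ t ∈ Icc 0 b, DifferentiableAt ℝ f t)
    (hf' : ∀ t ∈ Icc 0 b, DifferentiableAt ℝ (deriv f) t)
    (hk : ∀ t ∈ Icc 0 b, k ≤ deriv (deriv f) t + f t) :
    k + (f 0 - k) * cos b + deriv f 0 * sin b ≤ f b := by
  set v : ℝ → ℝ := fun t => deriv f t * sin (b - t) + (f t - k) * cos (b - t)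
  have hv : ∀ t ∈ Icc 0 b,
      HasDerivAt v ((deriv (deriv f) t + f t - k) * sin (b - t)) t := by
    intro t ht
    have hsin : HasDerivAt (fun s => sin (b - s)) (-cos (b - t)) t := by
      simpa using ((hasDerivAt_id t).const_sub b).sin
    have hcos : HasDerivAt (fun s => cos (b - s)) (sin (b - t)) t := by
      simpa using ((hasDerivAt_id t).const_sub b).cos
    exact (((hf' t ht).hasDerivAt.mul hsin).add
      (((hf t ht).hasDerivAt.sub_const k).mul hcos)).congr_deriv (by ring)
  have hv_mono : MonotoneOn v (Icc 0 b) := by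
    refine monotoneOn_of_hasDerivWithinAt_nonneg (convex_Icc 0 b)
      (fun t ht => (hv t ht).continuousAt.continuousWithinAt)
      (fun t ht => (hv t (interior_subset ht)).hasDerivWithinAt) fun t ht => ?_
    rw [interior_Icc] at ht
    have hsin : 0 ≤ sin (b - t) :=
      sin_nonneg_of_nonneg_of_le_pi (by linarith [ht.2]) (by linarith [ht.1])
    exact mul_nonneg (by linarith [hk t (Ioo_subset_Icc_self ht)]) hsin
  have := hv_mono (left_mem_Icc.2 hb₀) (right_mem_Icc.2 hb₀) hb₀
  simp only [v, sub_zero, sub_self, sin_zero, cos_zero] at this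
  linarith

theorem spherical_core (f : ℝ → ℝ) (ℓ a c b : ℝ)
    (hℓ : ℓ ∈ Set.Ioc 0 (Real.pi / 2)) (ha : a ∈ Set.Icc 0 ℓ)
    (hc : c ∈ Set.Icc (0:ℝ) 1) (hb : 0 < b)
    (hd1 : ∀ t ∈ Set.Icc 0 b, DifferentiableAt ℝ f t)
    (hd2 : ∀ t ∈ Set.Icc 0 b, DifferentiableAt ℝ (deriv f) t)
    (hineq : ∀ t ∈ Set.Icc 0 b, 1 ≤ deriv (deriv f) t + f t)
    (h0 : f 0 = 1 - Real.cos (ℓ - a))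
    (h0' : deriv f 0 = Real.sin (ℓ - a) * c)
    (hfb : f b = 1 - Real.cos ℓ)
    (hpos : ∀ t ∈ Set.Icc 0 b,
      0 ≤ 1 - (1 - Real.cos (ℓ - a) * Real.cos t + Real.sin (ℓ - a) * Real.sin t * c)) :
    Real.cos ℓ ≤ Real.cos (ℓ - a) * Real.cos b - Real.sin (ℓ - a) * Real.sin b * c
    ∧ Real.cos (ℓ - a) * Real.cos b - Real.sin (ℓ - a) * Real.sin b * c
        ≤ Real.cos (ℓ - a) * Real.cos b := by
  have hℓπ := hℓ.2
  have hA : 0 ≤ cos (ℓ - a) :=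
    cos_nonneg_of_mem_Icc ⟨by linarith [ha.2, pi_pos], by linarith [ha.1]⟩
  have hs : 0 ≤ sin (ℓ - a) :=
    sin_nonneg_of_nonneg_of_le_pi (by linarith [ha.2]) (by linarith [ha.1, pi_pos])
  by_cases hbπ : b ≤ π
  · have hcmp := const_add_mul_cos_add_mul_sin_le_of_const_le_deriv_deriv_add f 1 b hb.le hbπ
      hd1 hd2 hineq
    rw [h0, h0', hfb] at hcmp
    have hBsin : 0 ≤ sin (ℓ - a) * sin b * c :=
      mul_nonneg (mul_nonneg hs (sin_nonneg_of_nonneg_of_le_pi hb.le hbπ)) hc.1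
    constructor <;> linarith
  · replace hbπ := not_le.mp hbπ
    have hB : sin (ℓ - a) * c ≤ 0 := by
      simpa using hpos (π / 2) ⟨by linarith [pi_pos], by linarith [pi_pos]⟩
    have hA' : cos (ℓ - a) ≤ 0 := by simpa using hpos π ⟨pi_pos.le, hbπ.le⟩
    have hcosℓ : cos ℓ ≤ cos (ℓ - a) :=
      cos_le_cos_of_nonneg_of_le_pi (by linarith [ha.2]) (by linarith [pi_pos])
        (by linarith [ha.1])
    have hB0 : sin (ℓ - a) * sin b * c = 0 := by
      rw [mul_right_comm, le_antisymm hB (mul_nonneg hs hc.1), zero_mul]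
    rw [hB0, le_antisymm hA' hA, zero_mul]
    exact ⟨by linarith, by simp⟩
end
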